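/- arXiv:2104.07121 — 2 statements merged into one kernel-verified Lean document; each statement's English description precedes it below -/
import Mathlib

section
/- Let G be a simple graph, fix a vertex P ∈ V(G), and let G_1, …, G_m be the connected components of the graph G − P obtained from G by removing P and its incident edges. For i = 1, …, m let deg_{G_i} P be the number of edges of G joining P to a vertex of G_i. Then the multiplicity of the numerical semigroup H_f(P) (the least positive element of H_f(P)) equals min{ deg_{G_i} P : 1 ≤ i ≤ m }. -/
open scoped Classical

/-- A graph: a finite connected multigraph with no loop edges, given by a symmetric
edge-multiplicity function on a finite nonempty vertex type. -/
structure Multigraph where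
  V : Type
  [fintypeV : Fintype V]
  [decEqV : DecidableEq V]
  [nonemptyV : Nonempty V]
  adj : V → V → ℕ
  adj_symm : ∀ u v, adj u v = adj v u
  adj_loopless : ∀ v, adj v v = 0
  conn : ∀ u v, Relation.ReflTransGen (fun a b => adj a b ≠ 0) u v

attribute [instance] Multigraph.fintypeV Multigraph.decEqV Multigraph.nonemptyV

namespace Multigraph

variable (G : Multigraph)

/-- A simple graph: no multiple edges and more than one vertex. -/
def Simple : Prop :=
  (∀ u v, G.adj u v ≤ 1) ∧ 1 < Fintype.card G.V

/-- The degree of a divisor. -/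
def deg (D : G.V → ℤ) : ℤ := ∑ v, D v

/-- A divisor is effective if all its coefficients are nonnegative. -/
def Effective (D : G.V → ℤ) : Prop := ∀ v, 0 ≤ D v

/-- The Laplacian of an integer-valued function on the vertices. -/
def lap (f : G.V → ℤ) : G.V → ℤ := fun v => ∑ w, (G.adj v w : ℤ) * (f v - f w)

/-- The linear system `|D|` is nonempty, i.e. `D` is linearly equivalent to an
effective divisor. -/
def LinNonempty (D : G.V → ℤ) : Prop :=
  ∃ f : G.V → ℤ, G.Effective (D - G.lap f)

/-- The Baker–Norine rank of a divisor: `-1` if `|D| = ∅`, otherwise the maximal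
`k` such that `|D - E| ≠ ∅` for every effective divisor `E` of degree `k`. -/
noncomputable def rank (D : G.V → ℤ) : ℤ :=
  if G.LinNonempty D then
    ((sSup {k : ℕ | ∀ E : G.V → ℤ, G.Effective E → G.deg E = (k : ℤ) →
        G.LinNonempty (D - E)} : ℕ) : ℤ)
  else -1

/-- The divisor `n • P`. -/
def pt (P : G.V) (n : ℤ) : G.V → ℤ := fun v => if v = P then n else 0

/-- The rank Weierstrass set of `G` at `P`. -/
def Hr (P : G.V) : Set ℕ :=
  {n : ℕ | G.rank (G.pt P ((n : ℤ) - 1)) < G.rank (G.pt P (n : ℤ))}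

/-- The functional Weierstrass set of `G` at `P`: pole orders at `P` of functions
with a unique pole at `P`. -/
def Hf (P : G.V) : Set ℕ :=
  {n : ℕ | ∃ f : G.V → ℤ, G.lap f P = -(n : ℤ) ∧ ∀ Q, Q ≠ P → 0 ≤ G.lap f Q}

/-- The number of edges joining `Q` to vertices outside `A`. -/
def outdeg (A : Finset G.V) (Q : G.V) : ℕ := ∑ R ∈ Aᶜ, G.adj Q R

/-- A divisor is `P`-reduced. -/
def Reduced (P : G.V) (D : G.V → ℤ) : Prop :=
  (∀ Q, Q ≠ P → 0 ≤ D Q) ∧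
  ∀ A : Finset G.V, A.Nonempty → P ∉ A → ∃ Q ∈ A, D Q < (G.outdeg A Q : ℤ)

/-- `G` is the graph `B_n` with two vertices joined by `n` parallel edges. -/
def IsBanana (n : ℕ) : Prop :=
  Fintype.card G.V = 2 ∧ ∀ u v, u ≠ v → G.adj u v = n

/-- `G` is the complete graph on `n` vertices. -/
def IsComplete (n : ℕ) : Prop :=
  Fintype.card G.V = n ∧ ∀ u v, u ≠ v → G.adj u v = 1

/-- `G` is the complete bipartite graph with parts `A` (of size `m`) and its
complement (of size `n`). -/
def IsCompleteBipartite (A : Finset G.V) (m n : ℕ) : Prop :=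
  A.card = m ∧ Aᶜ.card = n ∧
  ∀ u v, G.adj u v = if (u ∈ A ∧ v ∉ A) ∨ (u ∉ A ∧ v ∈ A) then 1 else 0

/-- `λ_Q(k)`: the least `n` with `r(nQ) = k`. -/
noncomputable def lam (Q : G.V) (k : ℕ) : ℕ :=
  sInf {n : ℕ | G.rank (G.pt Q (n : ℤ)) = (k : ℤ)}

end Multigraph

/-- `G` is the vertex gluing of `G₁` and `G₂` identifying `P₁` and `P₂` into `P`. -/
def IsVertexGluing (G G₁ G₂ : Multigraph) (P : G.V) (P₁ : G₁.V) (P₂ : G₂.V) : Prop :=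
  ∃ (ι₁ : G₁.V → G.V) (ι₂ : G₂.V → G.V),
    Function.Injective ι₁ ∧ Function.Injective ι₂ ∧
    ι₁ P₁ = P ∧ ι₂ P₂ = P ∧
    (∀ a b, ι₁ a = ι₂ b → ι₁ a = P) ∧
    (∀ v : G.V, (∃ a, ι₁ a = v) ∨ (∃ b, ι₂ b = v)) ∧
    (∀ a b, G.adj (ι₁ a) (ι₁ b) = G₁.adj a b) ∧
    (∀ a b, G.adj (ι₂ a) (ι₂ b) = G₂.adj a b) ∧
    (∀ a b, ι₁ a ≠ P → ι₂ b ≠ P → G.adj (ι₁ a) (ι₂ b) = 0)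

/-!
The indicator function of a component `C` of `G - P` has a unique pole at `P`, whose order is
the number of edges from `P` to `C`. Conversely, let `f` have a unique pole at `P`. By the minimum
principle `f` attains its minimum at `P`, and once the minimum level set contains a vertex
`Q ≠ P` it contains the whole component of `Q` in `G - P`. Hence on a component `C` containing a
vertex where `f > f P` we have `f ≥ f P + 1`; summing `Δf` over `C`, the edges inside `C` cancel,
so the order of the pole is at least the number of edges from `P` to `C`.
-/

open Finset Relation

namespace Multigraph

variable (G : Multigraph)

section Laplacian

/-- The contributions of the edges inside `A` cancel in pairs. -/
theorem sum_lap_eq_sum_compl (A : Finset G.V) (f : G.V → ℤ) :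
    ∑ Q ∈ A, G.lap f Q = ∑ Q ∈ A, ∑ R ∈ Aᶜ, (G.adj Q R : ℤ) * (f Q - f R) := by
  set g : G.V → G.V → ℤ := fun Q R => (G.adj Q R : ℤ) * (f Q - f R)
  have hinner : ∑ Q ∈ A, ∑ R ∈ A, g Q R = 0 := by
    have hswap : ∑ Q ∈ A, ∑ R ∈ A, g Q R = ∑ Q ∈ A, ∑ R ∈ A, -g Q R := by
      rw [sum_comm]
      exact sum_congr rfl fun Q _ => sum_congr rfl fun R _ => by
        simp only [g, G.adj_symm R Q]; ring
    simp only [sum_neg_distrib] at hswap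
    linarith
  simp only [lap, ← sum_add_sum_compl A (g _), sum_add_distrib, hinner, zero_add, g]

theorem sum_lap_eq_zero (f : G.V → ℤ) : ∑ Q, G.lap f Q = 0 := by
  simpa using G.sum_lap_eq_sum_compl univ f

theorem lap_indicator (A : Finset G.V) (Q : G.V) :
    G.lap (fun u => if u ∈ A then 1 else 0) Q =
      if Q ∈ A then (G.outdeg A Q : ℤ) else -∑ R ∈ A, (G.adj Q R : ℤ) := by
  split_ifs with hQ
  · rw [outdeg, Nat.cast_sum, ← univ_inter Aᶜ, ← sum_ite_mem]
    exact sum_congr rfl fun R _ => by by_cases hR : R ∈ A <;> simp [hQ, hR]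
  · simp [lap, hQ]

theorem eq_of_adj_of_forall_le {f : G.V → ℤ} {a c : G.V} (hmin : ∀ u, f a ≤ f u)
    (hlap : 0 ≤ G.lap f a) (hac : G.adj a c ≠ 0) : f c = f a := by
  have hterm : ∀ w ∈ univ, (G.adj a w : ℤ) * (f a - f w) ≤ 0 := fun w _ =>
    mul_nonpos_of_nonneg_of_nonpos (by positivity) (by linarith [hmin w])
  have hzero := (sum_eq_zero_iff_of_nonpos hterm).mp
    (le_antisymm (sum_nonpos hterm) hlap) c (mem_univ c)
  rcases mul_eq_zero.mp hzero with h | h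
  · exact absurd (by exact_mod_cast h) hac
  · linarith

/-- Minimum principle: the minimum spreads along a path from a minimiser until it reaches `P`. -/
theorem le_of_lap_nonneg {P : G.V} {f : G.V → ℤ} (hf : ∀ Q, Q ≠ P → 0 ≤ G.lap f Q) (u : G.V) :
    f P ≤ f u := by
  obtain ⟨a, -, ha⟩ := exists_min_image univ f univ_nonempty
  suffices ∀ b, ReflTransGen (fun a b => G.adj a b ≠ 0) b P → (∀ u, f b ≤ f u) → f P ≤ f u from
    this a (G.conn a P) fun u => ha u (mem_univ u)
  intro b hb
  induction hb using ReflTransGen.head_induction_on with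
  | refl => exact fun h => h u
  | @head b c hbc _ ih =>
    intro hmin
    by_cases hb : b = P
    · exact hb ▸ hmin u
    · exact ih (G.eq_of_adj_of_forall_le hmin (hf b hb) hbc ▸ hmin)

end Laplacian

section Weierstrass

variable {G} {P : G.V} {A : Finset G.V}

theorem sum_adj_mem_Hf (hPA : P ∉ A) (hA : ∀ Q ∈ A, ∀ R ∉ A, R ≠ P → G.adj Q R = 0) :
    ∑ R ∈ A, G.adj P R ∈ G.Hf P := by
  refine ⟨fun u => if u ∈ A then 1 else 0, by simp [lap_indicator, hPA], fun Q hQP => ?_⟩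
  rw [lap_indicator]
  split_ifs with hQ
  · positivity
  · rw [neg_nonneg]
    exact (sum_eq_zero fun R hR => by simp [G.adj_symm Q R, hA R hR Q hQ hQP]).le

/-- Summing the Laplacian over `A`, only the edges from `A` to `P` survive, and each carries
a jump `f Q - f P ≥ 1`. -/
theorem sum_adj_le_of_lap_nonneg {f : G.V → ℤ} (hf : ∀ Q, Q ≠ P → 0 ≤ G.lap f Q)
    (hPA : P ∉ A) (hA : ∀ Q ∈ A, ∀ R ∉ A, R ≠ P → G.adj Q R = 0) (hlt : ∀ Q ∈ A, f P < f Q) :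
    ((∑ R ∈ A, G.adj P R : ℕ) : ℤ) ≤ -G.lap f P := by
  have hcut : ∀ Q ∈ A, ∑ R ∈ Aᶜ, (G.adj Q R : ℤ) * (f Q - f R) = G.adj Q P * (f Q - f P) :=
    fun Q hQ => sum_eq_single_of_mem P (mem_compl.mpr hPA) fun R hR hRP => by
      simp [hA Q hQ R (mem_compl.mp hR) hRP]
  have hsub : A ⊆ univ.erase P := fun Q hQ =>
    mem_erase.mpr ⟨ne_of_mem_of_not_mem hQ hPA, mem_univ Q⟩
  calc ((∑ R ∈ A, G.adj P R : ℕ) : ℤ)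
      ≤ ∑ Q ∈ A, (G.adj Q P : ℤ) * (f Q - f P) := by
        rw [Nat.cast_sum]
        refine sum_le_sum fun Q hQ => ?_
        rw [G.adj_symm]
        nlinarith [hlt Q hQ, (G.adj Q P).cast_nonneg (α := ℤ)]
    _ = ∑ Q ∈ A, G.lap f Q := by rw [sum_lap_eq_sum_compl, sum_congr rfl hcut]
    _ ≤ ∑ Q ∈ univ.erase P, G.lap f Q :=
        sum_le_sum_of_subset_of_nonneg hsub fun Q hQ _ => hf Q (ne_of_mem_erase hQ)
    _ = -G.lap f P := by
        linarith [add_sum_erase univ (G.lap f) (mem_univ P), G.sum_lap_eq_zero f]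

end Weierstrass

section Component

def AdjOff (P a b : G.V) : Prop := a ≠ P ∧ b ≠ P ∧ G.adj a b ≠ 0

noncomputable def component (P v : G.V) : Finset G.V := univ.filter (ReflTransGen (G.AdjOff P) v)

variable {G} {P v w : G.V} {x : ℕ}

theorem mem_component : w ∈ G.component P v ↔ ReflTransGen (G.AdjOff P) v w := by
  simp [component]

theorem ne_of_mem_component (hv : v ≠ P) (hw : w ∈ G.component P v) : w ≠ P := by
  induction mem_component.mp hw with
  | refl => exact hv
  | tail _ h => exact h.2.1

theorem adj_eq_zero_of_mem_component (hv : v ≠ P) {Q R : G.V} (hQ : Q ∈ G.component P v)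
    (hR : R ∉ G.component P v) (hRP : R ≠ P) : G.adj Q R = 0 := by
  by_contra hQR
  exact hR (mem_component.mpr
    ((mem_component.mp hQ).tail ⟨ne_of_mem_component hv hQ, hRP, hQR⟩))

theorem mem_component_comm : w ∈ G.component P v ↔ v ∈ G.component P w := by
  have : Std.Symm (G.AdjOff P) := ⟨fun a b ⟨ha, hb, hab⟩ => ⟨hb, ha, G.adj_symm a b ▸ hab⟩⟩
  simp only [mem_component]
  exact ⟨fun h => Std.Symm.symm _ _ h, fun h => Std.Symm.symm _ _ h⟩

/-- Since `G` is connected, walking from `v` towards `P` leaves the component of `v`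
only through an edge to `P`. -/
theorem exists_adj_mem_component (hv : v ≠ P) : ∃ w ∈ G.component P v, G.adj P w ≠ 0 := by
  suffices ∀ u, ReflTransGen (fun a b => G.adj a b ≠ 0) u P → u ∈ G.component P v →
      ∃ w ∈ G.component P v, G.adj P w ≠ 0 from
    this v (G.conn v P) (mem_component.mpr .refl)
  intro u hu
  induction hu using ReflTransGen.head_induction_on with
  | refl => exact fun hP => absurd rfl (ne_of_mem_component hv hP)
  | @head a c hac _ ih =>
    intro ha
    by_cases hc : c = P
    · exact ⟨a, ha, by rwa [G.adj_symm, ← hc]⟩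
    · exact ih (mem_component.mpr
        ((mem_component.mp ha).tail ⟨ne_of_mem_component hv ha, hc, hac⟩))

theorem sum_adj_component_pos (hv : v ≠ P) : 0 < ∑ w ∈ G.component P v, G.adj P w := by
  obtain ⟨w, hw, hPw⟩ := exists_adj_mem_component hv
  exact (Nat.pos_of_ne_zero hPw).trans_le (single_le_sum (fun _ _ => Nat.zero_le _) hw)

theorem sum_adj_component_mem_Hf (hv : v ≠ P) : ∑ w ∈ G.component P v, G.adj P w ∈ G.Hf P :=
  sum_adj_mem_Hf (fun hP => ne_of_mem_component hv hP rfl)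
    fun _ hQ _ hR hRP => adj_eq_zero_of_mem_component hv hQ hR hRP

theorem eq_of_reflTransGen_adjOff {f : G.V → ℤ} (hf : ∀ Q, Q ≠ P → 0 ≤ G.lap f Q) {a b : G.V}
    (hab : ReflTransGen (G.AdjOff P) a b) (ha : f a = f P) : f b = f P := by
  induction hab with
  | refl => exact ha
  | tail _ hbc ih =>
    rw [G.eq_of_adj_of_forall_le (fun u => ih ▸ G.le_of_lap_nonneg hf u) (hf _ hbc.1) hbc.2.2, ih]

theorem exists_sum_adj_component_le (hx : x ∈ G.Hf P) (hx0 : 0 < x) :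
    ∃ v, v ≠ P ∧ ∑ w ∈ G.component P v, G.adj P w ≤ x := by
  obtain ⟨f, hfP, hf⟩ := hx
  obtain ⟨v, hv⟩ : ∃ v, f v ≠ f P := by
    by_contra! hconst
    have : G.lap f P = 0 := sum_eq_zero fun w _ => by rw [hconst w, sub_self, mul_zero]
    omega
  have hvP : v ≠ P := fun h => hv (h ▸ rfl)
  have hlt : ∀ Q ∈ G.component P v, f P < f Q := fun Q hQ =>
    (G.le_of_lap_nonneg hf Q).lt_of_ne fun hQP =>
      hv (eq_of_reflTransGen_adjOff hf (mem_component.mp (mem_component_comm.mp hQ)) hQP.symm)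
  have := sum_adj_le_of_lap_nonneg hf (fun hP => ne_of_mem_component hvP hP rfl)
    (fun _ hQ _ hR hRP => adj_eq_zero_of_mem_component hvP hQ hR hRP) hlt
  exact ⟨v, hvP, by omega⟩

end Component

end Multigraph

theorem multiplicity_Hf_general (G : Multigraph) (P : G.V) :
    sInf {x : ℕ | x ∈ G.Hf P ∧ 0 < x} =
      sInf {d : ℕ | ∃ v : G.V, v ≠ P ∧
        d = ∑ w ∈ Finset.univ.filter
              (fun w => Relation.ReflTransGen
                (fun a b => a ≠ P ∧ b ≠ P ∧ G.adj a b ≠ 0) v w),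
            G.adj P w} := by
  change _ = sInf {d : ℕ | ∃ v, v ≠ P ∧ d = ∑ w ∈ G.component P v, G.adj P w}
  apply csInf_eq_csInf_of_forall_exists_le
  · rintro x ⟨hx, hx0⟩
    obtain ⟨v, hv, hle⟩ := Multigraph.exists_sum_adj_component_le hx hx0
    exact ⟨_, ⟨v, hv, rfl⟩, hle⟩
  · rintro _ ⟨v, hv, rfl⟩
    exact ⟨_, ⟨Multigraph.sum_adj_component_mem_Hf hv, Multigraph.sum_adj_component_pos hv⟩,
      le_rfl⟩

/-- The multiplicity of the functional Weierstrass set of a simple graph at `P`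
is the minimum, over the connected components of `G - P`, of the number of edges
joining `P` to that component. -/
theorem multiplicity_Hf (G : Multigraph) (hG : G.Simple) (P : G.V) :
    sInf {x : ℕ | x ∈ G.Hf P ∧ 0 < x} =
      sInf {d : ℕ | ∃ v : G.V, v ≠ P ∧
        d = ∑ w ∈ Finset.univ.filter
              (fun w => Relation.ReflTransGen
                (fun a b => a ≠ P ∧ b ≠ P ∧ G.adj a b ≠ 0) v w),
            G.adj P w} :=
  multiplicity_Hf_general G P
end

section
/- Let G_1 and G_2 be graphs, let P_1 ∈ V(G_1) and P_2 ∈ V(G_2), let G be the vertex gluing of G_1 and G_2 at P_1 and P_2, and let P ∈ V(G) be the identified vertex. For every k ∈ ℕ, λ_P^G(k) = max{ λ_{P_1}^{G_1}(k_1) + λ_{P_2}^{G_2}(k_2) : k_1, k_2 ∈ ℕ, k_1 + k_2 = k }, where λ_Q(k) = min{ n ∈ ℕ : r(nQ) = k }. -/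
open scoped Classical

/-!
`λ_P(k) ≤ n` holds exactly when `|nP - E| ≠ ∅` for every effective `E` of degree `k`: the
sequence `n ↦ r(nP)` starts at `0`, is monotone, grows by at most one per step and is unbounded
(by connectivity), so it first takes the value `k` where it first becomes `≥ k`.

On the glued graph the Laplacian of `f` is the sum of the Laplacians of its restrictions to the
two pieces, their values at `P₁` and `P₂` adding up at `P`. Hence a divisor has a nonempty linear
system iff it is such a sum `D₁ + D₂` with `|D₁|, |D₂| ≠ ∅` on the pieces, and for `E = E₁ + E₂`
we get `|nP - E| ≠ ∅` iff `|n₁P₁ - E₁| ≠ ∅` and `|n₂P₂ - E₂| ≠ ∅` for some `n₁ + n₂ = n`.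
Splitting an arbitrary `E` this way gives `λ_P(k) ≤ max (λ_{P₁}(k₁) + λ_{P₂}(k₂))`; gluing an
`E₁` and an `E₂` that witness `r((λ_{P_i}(k_i) - 1)P_i) < k_i` gives the reverse inequality.
-/

lemma sInf_setOf_eq_le_iff {f : ℕ → ℤ} (hf₀ : f 0 ≤ 0) (hf : Monotone f)
    (hstep : ∀ n, f (n + 1) ≤ f n + 1) {k : ℕ} (hk : ∃ n, (k : ℤ) ≤ f n) (m : ℕ) :
    sInf {n | f n = k} ≤ m ↔ (k : ℤ) ≤ f m := by
  have hfind : f (Nat.find hk) = k := by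
    refine le_antisymm ?_ (Nat.find_spec hk)
    rcases Nat.eq_zero_or_pos (Nat.find hk) with h | h
    · rw [h]
      omega
    · have hprev := Nat.find_min hk (Nat.sub_one_lt_of_lt h)
      have := hstep (Nat.find hk - 1)
      rw [Nat.sub_add_cancel h] at this
      omega
  have hsInf : sInf {n | f n = k} = Nat.find hk :=
    le_antisymm (Nat.sInf_le hfind)
      (le_csInf ⟨_, hfind⟩ fun n hn => Nat.find_min' hk hn.ge)
  rw [hsInf]
  exact ⟨fun h => (Nat.find_spec hk).trans (hf h), Nat.find_min' hk⟩

namespace Multigraph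

variable {G : Multigraph}

lemma pt_eq_single (P : G.V) (n : ℤ) : G.pt P n = Pi.single P n := by
  funext v
  simp [pt, Pi.single_apply]

lemma lap_add (f f' : G.V → ℤ) : G.lap (f + f') = G.lap f + G.lap f' := by
  funext v
  simp only [lap, Pi.add_apply, ← Finset.sum_add_distrib]
  exact Finset.sum_congr rfl fun w _ => by ring

lemma lap_const (c : ℤ) : G.lap (fun _ => c) = 0 := by
  funext v
  simp [lap]

lemma lap_zero : G.lap 0 = 0 :=
  lap_const 0

lemma lap_add_const (f : G.V → ℤ) (c : ℤ) : G.lap (f + fun _ => c) = G.lap f := by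
  rw [lap_add, lap_const, add_zero]

lemma deg_add (D D' : G.V → ℤ) : G.deg (D + D') = G.deg D + G.deg D' :=
  Finset.sum_add_distrib

lemma deg_sub (D D' : G.V → ℤ) : G.deg (D - D') = G.deg D - G.deg D' :=
  Finset.sum_sub_distrib _ _

lemma deg_single (P : G.V) (n : ℤ) : G.deg (Pi.single P n) = n :=
  Fintype.sum_pi_single' P n

lemma deg_extend {G' : Multigraph} {ι : G'.V → G.V} (hι : Function.Injective ι)
    (D : G'.V → ℤ) : G.deg (Function.extend ι D 0) = G'.deg D :=
  (Fintype.sum_of_injective ι hι D (Function.extend ι D 0)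
    (fun _ hv => Function.extend_apply' D (0 : G.V → ℤ) _ hv)
    fun a => (hι.extend_apply D (0 : G.V → ℤ) a).symm).symm

lemma deg_lap (f : G.V → ℤ) : G.deg (G.lap f) = 0 := by
  have hswap : ∑ v, ∑ w, (G.adj v w : ℤ) * f w = ∑ v, ∑ w, (G.adj v w : ℤ) * f v := by
    rw [Finset.sum_comm]
    exact Finset.sum_congr rfl fun v _ => Finset.sum_congr rfl fun w _ => by rw [G.adj_symm]
  simp only [deg, lap, mul_sub, Finset.sum_sub_distrib, hswap, sub_self]

lemma effective_single (P : G.V) {n : ℤ} (hn : 0 ≤ n) : G.Effective (Pi.single P n) :=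
  (Pi.single_nonneg (α := fun _ : G.V => ℤ)).2 hn

lemma Effective.deg_nonneg {D : G.V → ℤ} (hD : G.Effective D) : 0 ≤ G.deg D :=
  Finset.sum_nonneg fun v _ => hD v

lemma Effective.eq_zero_of_deg_eq_zero {D : G.V → ℤ} (hD : G.Effective D) (h : G.deg D = 0) :
    D = 0 :=
  funext fun v => (Finset.sum_eq_zero_iff_of_nonneg fun v _ => hD v).1 h v (Finset.mem_univ v)

lemma Effective.linNonempty {D : G.V → ℤ} (hD : G.Effective D) : G.LinNonempty D :=
  ⟨0, by rwa [lap_zero, sub_zero]⟩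

lemma LinNonempty.add {D D' : G.V → ℤ} (h : G.LinNonempty D) (h' : G.LinNonempty D') :
    G.LinNonempty (D + D') := by
  obtain ⟨f, hf⟩ := h
  obtain ⟨f', hf'⟩ := h'
  refine ⟨f + f', fun v => ?_⟩
  have := add_nonneg (hf v) (hf' v)
  simp only [Pi.sub_apply, Pi.add_apply, lap_add] at this ⊢
  linarith

lemma LinNonempty.mono {D D' : G.V → ℤ} (h : G.LinNonempty D) (hle : D ≤ D') :
    G.LinNonempty D' :=
  let ⟨f, hf⟩ := h
  ⟨f, fun v => (hf v).trans (sub_le_sub_right (hle v) _)⟩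

lemma LinNonempty.deg_nonneg {D : G.V → ℤ} (h : G.LinNonempty D) : 0 ≤ G.deg D := by
  obtain ⟨f, hf⟩ := h
  simpa [deg_sub, deg_lap] using hf.deg_nonneg

variable (G) in
def linNonemptySubmonoid : AddSubmonoid (G.V → ℤ) where
  carrier := {D | G.LinNonempty D}
  zero_mem' := Effective.linNonempty fun _ => le_rfl
  add_mem' := LinNonempty.add

lemma LinNonempty.nsmul {D : G.V → ℤ} (h : G.LinNonempty D) (n : ℕ) : G.LinNonempty (n • D) :=
  G.linNonemptySubmonoid.nsmul_mem h n

lemma LinNonempty.sum {ι : Type*} {s : Finset ι} {D : ι → G.V → ℤ}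
    (h : ∀ i ∈ s, G.LinNonempty (D i)) : G.LinNonempty (∑ i ∈ s, D i) :=
  G.linNonemptySubmonoid.sum_mem h

variable (G) in
def RankAtLeast (D : G.V → ℤ) (k : ℕ) : Prop :=
  ∀ E : G.V → ℤ, G.Effective E → G.deg E = (k : ℤ) → G.LinNonempty (D - E)

lemma rankAtLeast_zero_iff {D : G.V → ℤ} : G.RankAtLeast D 0 ↔ G.LinNonempty D := by
  refine ⟨fun h => by simpa using h 0 (fun _ => le_rfl) (by simp [deg]), fun h E hE hdeg => ?_⟩
  rw [hE.eq_zero_of_deg_eq_zero (by simpa using hdeg), sub_zero]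
  exact h

lemma RankAtLeast.mono {D D' : G.V → ℤ} {k : ℕ} (h : G.RankAtLeast D k) (hle : D ≤ D') :
    G.RankAtLeast D' k :=
  fun E hE hdeg => (h E hE hdeg).mono (sub_le_sub_right hle E)

lemma RankAtLeast.anti {D : G.V → ℤ} {j k : ℕ} (h : G.RankAtLeast D k) (hjk : j ≤ k) :
    G.RankAtLeast D j := by
  intro E hE hdeg
  obtain ⟨v⟩ := G.nonemptyV
  have hpad := effective_single (G := G) v (n := (k : ℤ) - j) (by omega)
  refine (h (E + Pi.single v ((k : ℤ) - j)) (fun w => add_nonneg (hE w) (hpad w))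
    (by rw [deg_add, deg_single, hdeg]; ring)).mono ?_
  exact sub_le_sub_left (le_add_of_nonneg_right hpad) D

lemma RankAtLeast.of_add_single {D : G.V → ℤ} {P : G.V} {k : ℕ}
    (h : G.RankAtLeast (D + Pi.single P 1) (k + 1)) : G.RankAtLeast D k := by
  intro E hE hdeg
  have hpt := effective_single (G := G) P zero_le_one
  rw [← add_sub_add_right_eq_sub D E (Pi.single P 1)]
  exact h (E + Pi.single P 1) (fun w => add_nonneg (hE w) (hpt w))
    (by rw [deg_add, deg_single, hdeg]; push_cast; ring)

lemma RankAtLeast.le_deg {D : G.V → ℤ} {k : ℕ} (h : G.RankAtLeast D k) : (k : ℤ) ≤ G.deg D := by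
  obtain ⟨v⟩ := G.nonemptyV
  have := (h (Pi.single v k) (effective_single v (by positivity)) (deg_single v k)).deg_nonneg
  rw [deg_sub, deg_single] at this
  omega

lemma le_rank_iff {D : G.V → ℤ} (hD : G.LinNonempty D) (k : ℕ) :
    (k : ℤ) ≤ G.rank D ↔ G.RankAtLeast D k := by
  have hbdd : BddAbove {k | G.RankAtLeast D k} :=
    ⟨(G.deg D).toNat, fun k hk => by have := hk.le_deg; omega⟩
  have hmem : sSup {k | G.RankAtLeast D k} ∈ {k | G.RankAtLeast D k} :=
    Nat.sSup_mem ⟨0, rankAtLeast_zero_iff.2 hD⟩ hbdd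
  rw [rank, if_pos hD, Nat.cast_le]
  exact ⟨fun hk => RankAtLeast.anti hmem hk, fun hk => le_csSup hbdd hk⟩

lemma rank_nonneg {D : G.V → ℤ} (hD : G.LinNonempty D) : 0 ≤ G.rank D :=
  (le_rank_iff hD 0).2 (rankAtLeast_zero_iff.2 hD)

lemma rank_le_deg {D : G.V → ℤ} (hD : G.LinNonempty D) : G.rank D ≤ G.deg D := by
  lift G.rank D to ℕ using rank_nonneg hD with r hr
  exact ((le_rank_iff hD r).1 hr.le).le_deg

lemma rank_mono {D D' : G.V → ℤ} (hD : G.LinNonempty D) (hle : D ≤ D') :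
    G.rank D ≤ G.rank D' := by
  lift G.rank D to ℕ using rank_nonneg hD with r hr
  exact (le_rank_iff (hD.mono hle) r).2 (((le_rank_iff hD r).1 hr.le).mono hle)

lemma rank_add_single_le {D : G.V → ℤ} (hD : G.LinNonempty D) (P : G.V) :
    G.rank (D + Pi.single P 1) ≤ G.rank D + 1 := by
  have hD' : G.LinNonempty (D + Pi.single P 1) :=
    hD.mono (le_add_of_nonneg_right (effective_single P zero_le_one))
  lift G.rank (D + Pi.single P 1) to ℕ using rank_nonneg hD' with r hr
  rcases r with _ | r
  · have := rank_nonneg hD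
    omega
  · have := (le_rank_iff hD r).2 ((le_rank_iff hD' (r + 1)).1 hr.le).of_add_single
    omega

lemma lap_single_one_apply (b w : G.V) :
    G.lap (Pi.single b 1) w = if w = b then ((∑ x, G.adj b x : ℕ) : ℤ) else -(G.adj w b : ℤ) := by
  by_cases hw : w = b
  · subst hw
    simp [lap, Pi.single_apply, mul_sub, Finset.sum_sub_distrib, G.adj_loopless]
  · simp [lap, Pi.single_apply, hw]

/-- Firing `b` turns `deg(b) • b` into `∑ w, adj(b, w) • w`, which contains `c`. -/
lemma linNonempty_single_sub_single_of_adj {b c : G.V} (h : G.adj b c ≠ 0) :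
    G.LinNonempty (Pi.single b ((∑ x, G.adj b x : ℕ) : ℤ) - Pi.single c 1) := by
  have hcb : c ≠ b := fun e => h (e ▸ G.adj_loopless c)
  have hadj : 0 < G.adj c b := by rw [G.adj_symm]; omega
  refine ⟨Pi.single b 1, fun w => ?_⟩
  simp only [Pi.sub_apply, lap_single_one_apply, Pi.single_apply]
  by_cases hwb : w = b
  · simp [hwb, hcb.symm]
  · by_cases hwc : w = c
    · subst hwc
      simp [hcb]
      omega
    · simp [hwb, hwc]

lemma exists_linNonempty_single_sub_single (P v : G.V) :
    ∃ m : ℕ, G.LinNonempty (Pi.single P (m : ℤ) - Pi.single v 1) := by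
  induction G.conn P v with
  | refl => exact ⟨1, Effective.linNonempty (by simp [Effective])⟩
  | @tail b c _ hbc ih =>
    obtain ⟨m, hm⟩ := ih
    refine ⟨m * ∑ x, G.adj b x, ?_⟩
    convert (hm.nsmul (∑ x, G.adj b x)).add (linNonempty_single_sub_single_of_adj hbc) using 1
    ext w
    rw [Pi.add_apply, Pi.smul_apply, nsmul_eq_mul]
    simp only [Pi.sub_apply, Pi.single_apply]
    split_ifs <;> push_cast <;> ring

lemma exists_forall_linNonempty_single_sub_single (P : G.V) :
    ∃ M : ℕ, ∀ v, G.LinNonempty (Pi.single P (M : ℤ) - Pi.single v 1) := by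
  choose m hm using exists_linNonempty_single_sub_single P
  refine ⟨Finset.univ.sup m, fun v => (hm v).mono (sub_le_sub_right (Pi.single_le_single.2 ?_) _)⟩
  exact_mod_cast Finset.le_sup (Finset.mem_univ v)

lemma exists_rankAtLeast_single (P : G.V) (k : ℕ) : ∃ n : ℕ, G.RankAtLeast (Pi.single P n) k := by
  obtain ⟨M, hM⟩ := exists_forall_linNonempty_single_sub_single P
  refine ⟨M * k, fun E hE hdeg => ?_⟩
  have hsum : Pi.single P ((M * k : ℕ) : ℤ) - E =
      ∑ v, (E v).toNat • (Pi.single P (M : ℤ) - Pi.single v 1) := by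
    ext w
    have hcast : ∀ v, ((E v).toNat : ℤ) = E v := fun v => Int.toNat_of_nonneg (hE v)
    simp only [Finset.sum_apply, Pi.smul_apply, Pi.sub_apply, smul_sub, Finset.sum_sub_distrib]
    simp only [nsmul_eq_mul, hcast, Pi.single_apply, mul_ite, mul_one, mul_zero,
      Finset.sum_ite_eq, Finset.mem_univ, if_true]
    by_cases hw : w = P
    · simp only [hw, if_true, ← Finset.sum_mul]
      rw [show ∑ x, E x = k from hdeg]
      push_cast
      ring
    · simp [hw]
  rw [hsum]
  exact LinNonempty.sum fun v _ => (hM v).nsmul _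

lemma lam_le_iff (P : G.V) (k n : ℕ) : G.lam P k ≤ n ↔ G.RankAtLeast (Pi.single P n) k := by
  have hlin : ∀ n : ℕ, G.LinNonempty (Pi.single P (n : ℤ)) :=
    fun n => (effective_single P (by positivity)).linNonempty
  have hunbdd : ∃ n : ℕ, (k : ℤ) ≤ G.rank (Pi.single P (n : ℤ)) := by
    obtain ⟨n, hn⟩ := exists_rankAtLeast_single P k
    exact ⟨n, (le_rank_iff (hlin n) k).2 hn⟩
  have key := sInf_setOf_eq_le_iff (f := fun n : ℕ => G.rank (Pi.single P (n : ℤ)))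
    (by simpa only [deg_single, Nat.cast_zero] using rank_le_deg (hlin 0))
    (fun m n hmn => rank_mono (hlin m) (Pi.single_le_single.2 (by exact_mod_cast hmn)))
    (fun n => by simpa [Pi.single_add] using rank_add_single_le (hlin n) P) hunbdd n
  simpa only [lam, pt_eq_single, le_rank_iff (hlin n)] using key

lemma rankAtLeast_single_iff (P : G.V) (k : ℕ) (d : ℤ) :
    G.RankAtLeast (Pi.single P d) k ↔ (G.lam P k : ℤ) ≤ d := by
  rcases lt_or_ge d 0 with hd | hd
  · refine iff_of_false (fun h => ?_) (by omega)
    have := h.le_deg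
    rw [deg_single] at this
    omega
  · lift d to ℕ using hd
    exact (lam_le_iff P k d).symm.trans Nat.cast_le.symm

lemma linNonempty_single_lam_deg_sub (P : G.V) {E : G.V → ℤ} (hE : G.Effective E) :
    G.LinNonempty (Pi.single P (G.lam P (G.deg E).toNat : ℤ) - E) :=
  (rankAtLeast_single_iff P _ _).2 le_rfl E hE (Int.toNat_of_nonneg hE.deg_nonneg).symm

lemma exists_effective_forall_lam_le (P : G.V) (k : ℕ) :
    ∃ E, G.Effective E ∧ G.deg E = k ∧
      ∀ d : ℤ, G.LinNonempty (Pi.single P d - E) → (G.lam P k : ℤ) ≤ d := by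
  have h : ¬ G.RankAtLeast (Pi.single P ((G.lam P k : ℤ) - 1)) k := by
    rw [rankAtLeast_single_iff]
    omega
  simp only [RankAtLeast, not_forall, exists_prop] at h
  obtain ⟨E, hE, hdeg, hE'⟩ := h
  refine ⟨E, hE, hdeg, fun d hd => ?_⟩
  by_contra! hlt
  exact hE' (hd.mono (sub_le_sub_right (Pi.single_le_single.2 (by omega)) E))

end Multigraph

structure VertexGluing (G G₁ G₂ : Multigraph) (P : G.V) (P₁ : G₁.V) (P₂ : G₂.V) where
  ι₁ : G₁.V → G.V
  ι₂ : G₂.V → G.V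
  injective₁ : Function.Injective ι₁
  injective₂ : Function.Injective ι₂
  ι₁_base : ι₁ P₁ = P
  ι₂_base : ι₂ P₂ = P
  eq_base_of_ι₁_eq_ι₂ : ∀ a b, ι₁ a = ι₂ b → ι₁ a = P
  cover : ∀ v : G.V, (∃ a, ι₁ a = v) ∨ (∃ b, ι₂ b = v)
  adj_ι₁ : ∀ a b, G.adj (ι₁ a) (ι₁ b) = G₁.adj a b
  adj_ι₂ : ∀ a b, G.adj (ι₂ a) (ι₂ b) = G₂.adj a b
  adj_ι₁_ι₂ : ∀ a b, ι₁ a ≠ P → ι₂ b ≠ P → G.adj (ι₁ a) (ι₂ b) = 0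

lemma IsVertexGluing.nonempty_vertexGluing {G G₁ G₂ : Multigraph} {P : G.V} {P₁ : G₁.V} {P₂ : G₂.V}
    (h : IsVertexGluing G G₁ G₂ P P₁ P₂) : Nonempty (VertexGluing G G₁ G₂ P P₁ P₂) :=
  let ⟨ι₁, ι₂, h₁, h₂, h₃, h₄, h₅, h₆, h₇, h₈, h₉⟩ := h
  ⟨⟨ι₁, ι₂, h₁, h₂, h₃, h₄, h₅, h₆, h₇, h₈, h₉⟩⟩

namespace VertexGluing

open Multigraph Function

variable {G G₁ G₂ : Multigraph} {P : G.V} {P₁ : G₁.V} {P₂ : G₂.V}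
variable (g : VertexGluing G G₁ G₂ P P₁ P₂)

def symm : VertexGluing G G₂ G₁ P P₂ P₁ where
  ι₁ := g.ι₂
  ι₂ := g.ι₁
  injective₁ := g.injective₂
  injective₂ := g.injective₁
  ι₁_base := g.ι₂_base
  ι₂_base := g.ι₁_base
  eq_base_of_ι₁_eq_ι₂ b a h := h.trans (g.eq_base_of_ι₁_eq_ι₂ a b h.symm)
  cover v := (g.cover v).symm
  adj_ι₁ := g.adj_ι₂
  adj_ι₂ := g.adj_ι₁
  adj_ι₁_ι₂ b a hb ha := by rw [G.adj_symm]; exact g.adj_ι₁_ι₂ a b ha hb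

lemma ι₁_ne_base {a : G₁.V} (ha : a ≠ P₁) : g.ι₁ a ≠ P :=
  fun h => ha (g.injective₁ (h.trans g.ι₁_base.symm))

lemma not_exists_ι₂_eq_ι₁ {a : G₁.V} (ha : a ≠ P₁) : ¬∃ b, g.ι₂ b = g.ι₁ a :=
  fun ⟨b, hb⟩ => g.ι₁_ne_base ha (g.eq_base_of_ι₁_eq_ι₂ a b hb.symm)

lemma ι₂_ne_base {b : G₂.V} (hb : b ≠ P₂) : g.ι₂ b ≠ P :=
  g.symm.ι₁_ne_base hb

lemma not_exists_ι₁_eq_ι₂ {b : G₂.V} (hb : b ≠ P₂) : ¬∃ a, g.ι₁ a = g.ι₂ b :=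
  g.symm.not_exists_ι₂_eq_ι₁ hb

lemma funext_pieces {α : Type*} {F F' : G.V → α} (hP : F P = F' P)
    (h₁ : ∀ a, a ≠ P₁ → F (g.ι₁ a) = F' (g.ι₁ a)) (h₂ : ∀ b, b ≠ P₂ → F (g.ι₂ b) = F' (g.ι₂ b)) :
    F = F' := by
  funext v
  rcases g.cover v with ⟨a, rfl⟩ | ⟨b, rfl⟩
  · rcases eq_or_ne a P₁ with rfl | ha
    · rwa [g.ι₁_base]
    · exact h₁ a ha
  · rcases eq_or_ne b P₂ with rfl | hb
    · rwa [g.ι₂_base]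
    · exact h₂ b hb

noncomputable def push (D₁ : G₁.V → ℤ) (D₂ : G₂.V → ℤ) : G.V → ℤ :=
  extend g.ι₁ D₁ 0 + extend g.ι₂ D₂ 0

lemma symm_push (D₁ : G₁.V → ℤ) (D₂ : G₂.V → ℤ) : g.symm.push D₂ D₁ = g.push D₁ D₂ :=
  add_comm _ _

lemma push_apply_ι₁ (D₁ : G₁.V → ℤ) (D₂ : G₂.V → ℤ) {a : G₁.V} (ha : a ≠ P₁) :
    g.push D₁ D₂ (g.ι₁ a) = D₁ a := by
  rw [push, Pi.add_apply, g.injective₁.extend_apply,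
    extend_apply' _ _ _ (g.not_exists_ι₂_eq_ι₁ ha), Pi.zero_apply, add_zero]

lemma push_apply_ι₂ (D₁ : G₁.V → ℤ) (D₂ : G₂.V → ℤ) {b : G₂.V} (hb : b ≠ P₂) :
    g.push D₁ D₂ (g.ι₂ b) = D₂ b := by
  rw [← g.symm_push]
  exact g.symm.push_apply_ι₁ D₂ D₁ hb

lemma push_apply_base (D₁ : G₁.V → ℤ) (D₂ : G₂.V → ℤ) : g.push D₁ D₂ P = D₁ P₁ + D₂ P₂ := by
  have h₁ := g.injective₁.extend_apply D₁ 0 P₁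
  have h₂ := g.injective₂.extend_apply D₂ 0 P₂
  rw [g.ι₁_base] at h₁
  rw [g.ι₂_base] at h₂
  rw [push, Pi.add_apply, h₁, h₂]

lemma push_add (D₁ E₁ : G₁.V → ℤ) (D₂ E₂ : G₂.V → ℤ) :
    g.push (D₁ + E₁) (D₂ + E₂) = g.push D₁ D₂ + g.push E₁ E₂ :=
  g.funext_pieces (by simp only [push_apply_base, Pi.add_apply]; ring)
    (fun a ha => by simp only [Pi.add_apply, g.push_apply_ι₁ _ _ ha])
    (fun b hb => by simp only [Pi.add_apply, g.push_apply_ι₂ _ _ hb])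

lemma push_sub (D₁ E₁ : G₁.V → ℤ) (D₂ E₂ : G₂.V → ℤ) :
    g.push (D₁ - E₁) (D₂ - E₂) = g.push D₁ D₂ - g.push E₁ E₂ :=
  g.funext_pieces (by simp only [push_apply_base, Pi.sub_apply]; ring)
    (fun a ha => by simp only [Pi.sub_apply, g.push_apply_ι₁ _ _ ha])
    (fun b hb => by simp only [Pi.sub_apply, g.push_apply_ι₂ _ _ hb])

lemma push_single (n₁ n₂ : ℤ) :
    g.push (Pi.single P₁ n₁) (Pi.single P₂ n₂) = Pi.single P (n₁ + n₂) :=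
  g.funext_pieces (by simp [push_apply_base])
    (fun a ha => by simp [g.push_apply_ι₁ _ _ ha, ha, g.ι₁_ne_base ha])
    (fun b hb => by simp [g.push_apply_ι₂ _ _ hb, hb, g.ι₂_ne_base hb])

lemma push_comp_update (E : G.V → ℤ) : g.push (E ∘ g.ι₁) (update (E ∘ g.ι₂) P₂ 0) = E :=
  g.funext_pieces (by simp [push_apply_base, g.ι₁_base])
    (fun a ha => g.push_apply_ι₁ _ _ ha)
    (fun b hb => by rw [g.push_apply_ι₂ _ _ hb, update_of_ne hb, comp_apply])

lemma effective_push {D₁ : G₁.V → ℤ} {D₂ : G₂.V → ℤ} (h₁ : G₁.Effective D₁)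
    (h₂ : G₂.Effective D₂) : G.Effective (g.push D₁ D₂) :=
  fun v => add_nonneg (extend_nonneg (f := g.ι₁) h₁ le_rfl v)
    (extend_nonneg (f := g.ι₂) h₂ le_rfl v)

lemma exists_push_eq_of_effective {E : G.V → ℤ} (hE : G.Effective E) :
    ∃ E₁ E₂, g.push E₁ E₂ = E ∧ G₁.Effective E₁ ∧ G₂.Effective E₂ := by
  refine ⟨_, _, g.push_comp_update E, fun a => hE _, fun b => ?_⟩
  rcases eq_or_ne b P₂ with rfl | hb
  · simp
  · simpa [hb] using hE (g.ι₂ b)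

lemma deg_push (D₁ : G₁.V → ℤ) (D₂ : G₂.V → ℤ) :
    G.deg (g.push D₁ D₂) = G₁.deg D₁ + G₂.deg D₂ := by
  rw [push, deg_add, deg_extend g.injective₁, deg_extend g.injective₂]

lemma lap_apply_ι₁ (f : G.V → ℤ) {a : G₁.V} (ha : a ≠ P₁) :
    G.lap f (g.ι₁ a) = G₁.lap (f ∘ g.ι₁) a := by
  refine (Fintype.sum_of_injective g.ι₁ g.injective₁ _ _ (fun v hv => ?_) fun a' => ?_).symm
  · obtain ⟨b, rfl⟩ := (g.cover v).resolve_left hv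
    have hb : b ≠ P₂ := by
      rintro rfl
      exact hv ⟨P₁, g.ι₁_base.trans g.ι₂_base.symm⟩
    rw [g.adj_ι₁_ι₂ a b (g.ι₁_ne_base ha) (g.ι₂_ne_base hb), Nat.cast_zero, zero_mul]
  · rw [g.adj_ι₁, comp_apply, comp_apply]

lemma lap_apply_base (f : G.V → ℤ) :
    G.lap f P = G₁.lap (f ∘ g.ι₁) P₁ + G₂.lap (f ∘ g.ι₂) P₂ := by
  -- the summand `t` vanishes at `P`, so it is the push of its restrictions to the pieces
  set t : G.V → ℤ := fun v => G.adj P v * (f P - f v) with ht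
  have htP : (t ∘ g.ι₂) P₂ = 0 := by simp [ht, g.ι₂_base]
  have hdeg := congrArg G.deg (g.push_comp_update t)
  rw [g.deg_push, update_eq_self_iff.2 htP.symm] at hdeg
  rw [show G.lap f P = G.deg t from rfl, ← hdeg]
  congr 1
  · simp only [deg, lap, ht, comp_apply, ← g.ι₁_base, g.adj_ι₁]
  · simp only [deg, lap, ht, comp_apply, ← g.ι₂_base, g.adj_ι₂]

lemma lap_eq_push (f : G.V → ℤ) :
    G.lap f = g.push (G₁.lap (f ∘ g.ι₁)) (G₂.lap (f ∘ g.ι₂)) :=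
  g.funext_pieces (by rw [push_apply_base, lap_apply_base])
    (fun a ha => by rw [g.push_apply_ι₁ _ _ ha, g.lap_apply_ι₁ _ ha])
    (fun b hb => by rw [g.push_apply_ι₂ _ _ hb]; exact g.symm.lap_apply_ι₁ f hb)

lemma exists_comp_eq {f₁ : G₁.V → ℤ} {f₂ : G₂.V → ℤ} (h : f₁ P₁ = f₂ P₂) :
    ∃ F : G.V → ℤ, F ∘ g.ι₁ = f₁ ∧ F ∘ g.ι₂ = f₂ := by
  refine ⟨extend g.ι₁ f₁ (extend g.ι₂ f₂ 0), extend_comp g.injective₁ _ _, funext fun b => ?_⟩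
  by_cases hb : b = P₂
  · have hP := g.injective₁.extend_apply f₁ (extend g.ι₂ f₂ 0) P₁
    rw [g.ι₁_base] at hP
    rw [hb, comp_apply, g.ι₂_base, hP, h]
  · rw [comp_apply, extend_apply' _ _ _ (g.not_exists_ι₁_eq_ι₂ hb),
      g.injective₂.extend_apply]

lemma linNonempty_push {D₁ : G₁.V → ℤ} {D₂ : G₂.V → ℤ} (h₁ : G₁.LinNonempty D₁)
    (h₂ : G₂.LinNonempty D₂) : G.LinNonempty (g.push D₁ D₂) := by
  obtain ⟨f₁, hf₁⟩ := h₁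
  obtain ⟨f₂, hf₂⟩ := h₂
  -- shifting `f₂` by a constant keeps its Laplacian and makes it agree with `f₁` at the base
  obtain ⟨F, hF₁, hF₂⟩ :=
    g.exists_comp_eq (f₁ := f₁) (f₂ := f₂ + fun _ => f₁ P₁ - f₂ P₂) (by simp)
  refine ⟨F, ?_⟩
  rw [g.lap_eq_push, hF₁, hF₂, lap_add_const, ← push_sub]
  exact g.effective_push hf₁ hf₂

lemma exists_push_eq_of_linNonempty {D : G.V → ℤ} (h : G.LinNonempty D) :
    ∃ D₁ D₂, g.push D₁ D₂ = D ∧ G₁.LinNonempty D₁ ∧ G₂.LinNonempty D₂ := by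
  obtain ⟨f, hf⟩ := h
  obtain ⟨E₁, E₂, hE, hE₁, hE₂⟩ := g.exists_push_eq_of_effective hf
  refine ⟨E₁ + G₁.lap (f ∘ g.ι₁), E₂ + G₂.lap (f ∘ g.ι₂), ?_, ⟨f ∘ g.ι₁, ?_⟩, ⟨f ∘ g.ι₂, ?_⟩⟩
  · rw [push_add, hE, ← lap_eq_push, sub_add_cancel]
  · rwa [add_sub_cancel_right]
  · rwa [add_sub_cancel_right]

lemma eq_single_of_push_eq_single {F₁ : G₁.V → ℤ} {F₂ : G₂.V → ℤ} {n : ℤ}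
    (h : g.push F₁ F₂ = Pi.single P n) : F₁ = Pi.single P₁ (F₁ P₁) := by
  funext a
  rcases eq_or_ne a P₁ with rfl | ha
  · simp
  · rw [← g.push_apply_ι₁ F₁ F₂ ha, h, Pi.single_eq_of_ne (g.ι₁_ne_base ha),
      Pi.single_eq_of_ne ha]

lemma linNonempty_single_sub_push_iff (n : ℤ) (E₁ : G₁.V → ℤ) (E₂ : G₂.V → ℤ) :
    G.LinNonempty (Pi.single P n - g.push E₁ E₂) ↔ ∃ n₁ n₂ : ℤ, n₁ + n₂ = n ∧
      G₁.LinNonempty (Pi.single P₁ n₁ - E₁) ∧ G₂.LinNonempty (Pi.single P₂ n₂ - E₂) := by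
  constructor
  · intro h
    obtain ⟨D₁, D₂, hD, h₁, h₂⟩ := g.exists_push_eq_of_linNonempty h
    have hF : g.push (D₁ + E₁) (D₂ + E₂) = Pi.single P n := by rw [push_add, hD, sub_add_cancel]
    refine ⟨(D₁ + E₁) P₁, (D₂ + E₂) P₂, ?_, ?_, ?_⟩
    · rw [← push_apply_base, hF, Pi.single_eq_same]
    · rwa [← g.eq_single_of_push_eq_single hF, add_sub_cancel_right]
    · rwa [← g.symm.eq_single_of_push_eq_single ((g.symm_push _ _).trans hF),
        add_sub_cancel_right]
  · rintro ⟨n₁, n₂, rfl, h₁, h₂⟩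
    rw [← g.push_single, ← push_sub]
    exact g.linNonempty_push h₁ h₂

end VertexGluing

section

open Multigraph VertexGluing

variable {G G₁ G₂ : Multigraph} {P : G.V} {P₁ : G₁.V} {P₂ : G₂.V}

lemma IsVertexGluing.lam_add_lam_le (h : IsVertexGluing G G₁ G₂ P P₁ P₂) (k₁ k₂ : ℕ) :
    G₁.lam P₁ k₁ + G₂.lam P₂ k₂ ≤ G.lam P (k₁ + k₂) := by
  obtain ⟨g⟩ := h.nonempty_vertexGluing
  obtain ⟨E₁, hE₁, hdeg₁, hlam₁⟩ := exists_effective_forall_lam_le P₁ k₁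
  obtain ⟨E₂, hE₂, hdeg₂, hlam₂⟩ := exists_effective_forall_lam_le P₂ k₂
  have hrank := (rankAtLeast_single_iff P (k₁ + k₂) (G.lam P (k₁ + k₂))).2 le_rfl
  obtain ⟨n₁, n₂, hn, h₁, h₂⟩ := (g.linNonempty_single_sub_push_iff _ E₁ E₂).1
    (hrank _ (g.effective_push hE₁ hE₂) (by rw [deg_push, hdeg₁, hdeg₂]; push_cast; ring))
  have := hlam₁ n₁ h₁
  have := hlam₂ n₂ h₂
  omega

lemma IsVertexGluing.lam_le_of_forall_lam_add_lam_le (h : IsVertexGluing G G₁ G₂ P P₁ P₂)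
    {k N : ℕ} (hN : ∀ k₁ k₂, k₁ + k₂ = k → G₁.lam P₁ k₁ + G₂.lam P₂ k₂ ≤ N) : G.lam P k ≤ N := by
  obtain ⟨g⟩ := h.nonempty_vertexGluing
  rw [lam_le_iff]
  intro E hE hdeg
  obtain ⟨E₁, E₂, rfl, hE₁, hE₂⟩ := g.exists_push_eq_of_effective hE
  have hk : (G₁.deg E₁).toNat + (G₂.deg E₂).toNat = k := by
    have := hE₁.deg_nonneg
    have := hE₂.deg_nonneg
    rw [deg_push] at hdeg
    omega
  refine (g.linNonempty_single_sub_push_iff _ _ _).2 ⟨N - G₂.lam P₂ (G₂.deg E₂).toNat,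
    _, by ring, ?_, linNonempty_single_lam_deg_sub P₂ hE₂⟩
  refine (linNonempty_single_lam_deg_sub P₁ hE₁).mono
    (sub_le_sub_right (Pi.single_le_single.2 ?_) _)
  have := hN _ _ hk
  omega

end

/-- Under vertex gluing, `λ_P(k)` is the maximum of `λ_{P₁}(k₁) + λ_{P₂}(k₂)`
over `k₁ + k₂ = k`. -/
theorem lam_vertexGluing (G G₁ G₂ : Multigraph) (P : G.V) (P₁ : G₁.V) (P₂ : G₂.V)
    (h : IsVertexGluing G G₁ G₂ P P₁ P₂) (k : ℕ) :
    G.lam P k =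
      sSup {x : ℕ | ∃ k₁ k₂ : ℕ, k₁ + k₂ = k ∧ x = G₁.lam P₁ k₁ + G₂.lam P₂ k₂} := by
  set S := {x : ℕ | ∃ k₁ k₂ : ℕ, k₁ + k₂ = k ∧ x = G₁.lam P₁ k₁ + G₂.lam P₂ k₂}
  have hle : ∀ x ∈ S, x ≤ G.lam P k := by
    rintro x ⟨k₁, k₂, rfl, rfl⟩
    exact h.lam_add_lam_le k₁ k₂
  exact le_antisymm
    (h.lam_le_of_forall_lam_add_lam_le fun k₁ k₂ hk => le_csSup ⟨_, hle⟩ ⟨k₁, k₂, hk, rfl⟩)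
    (csSup_le ⟨_, 0, k, zero_add k, rfl⟩ hle)
end
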